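/- (Strategy Preservation for safety) Let G be a MAGIIAN and G^K its MKBSC expansion, and assume G^K fulfills the PDK condition. Let F be an observable safety objective in G and F^K its translation for G^K. If there is a winning profile of observation-based perfect-recall strategies in G for F, then there is also a winning profile of observation-based perfect-recall strategies in G^K for F^K. -/
import Mathlib


open Set

/-- A multi-agent game with imperfect information against Nature (MAGIIAN).
`obs i l` is the observation block of agent `i` containing location `l`;
the axioms make the blocks of each agent a partition of the locations. -/
structure MAGIIAN (Agt Loc : Type) (Act : Agt → Type) where
  init : Loc
  trans : Loc → (∀ i, Act i) → Loc → Prop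
  obs : Agt → Loc → Set Loc
  obs_mem : ∀ i l, l ∈ obs i l
  obs_eq : ∀ i l l', l' ∈ obs i l → obs i l' = obs i l

namespace MAGIIAN

variable {Agt Loc : Type} {Act : Agt → Type}

/-- `o` is an observation (block) of agent `i` in `G`. -/
def IsObs (G : MAGIIAN Agt Loc Act) (i : Agt) (o : Set Loc) : Prop :=
  ∃ l, o = G.obs i l

/-- Transition relation `Δ_i` of the projection `G|_i`. -/
def projTrans (G : MAGIIAN Agt Loc Act) (i : Agt) (l : Loc) (a : Act i) (l' : Loc) : Prop :=
  ∃ σ : ∀ j, Act j, σ i = a ∧ G.trans l σ l'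

/-- Transition relation `Δ^K_i` of the individual KBSC expansion `(G|_i)^K`. -/
def kTrans (G : MAGIIAN Agt Loc Act) (i : Agt) (s : Set Loc) (a : Act i) (s' : Set Loc) : Prop :=
  ∃ o : Set Loc, G.IsObs i o ∧ s' = {l' ∈ o | ∃ l ∈ s, G.projTrans i l a l'} ∧ s'.Nonempty

/-- Pruned joint transition relation `Δ^K` of the MKBSC expansion `G^K`
(unrealisable transitions are removed). -/
def kTransJ (G : MAGIIAN Agt Loc Act) (s : Agt → Set Loc) (σ : ∀ i, Act i)
    (s' : Agt → Set Loc) : Prop :=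
  (∀ i, G.kTrans i (s i) (σ i) (s' i)) ∧
    ∃ l ∈ (⋂ i, s i), ∃ l' ∈ (⋂ i, s' i), G.trans l σ l'

/-- The MKBSC expansion `G^K`, as a MAGIIAN over joint knowledge states;
agent `i`'s observation of a joint knowledge state is determined by its `i`-th component. -/
def expand (G : MAGIIAN Agt Loc Act) : MAGIIAN Agt (Agt → Set Loc) Act where
  init := fun _ => {G.init}
  trans := G.kTransJ
  obs := fun i s => {s' | s' i = s i}
  obs_mem := fun _ _ => rfl
  obs_eq := by
    intro i s s' h
    simp only [Set.mem_setOf_eq] at h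
    ext t
    simp [Set.mem_setOf_eq, h]

/-- Reachability from the initial location. -/
def Reachable (G : MAGIIAN Agt Loc Act) (l : Loc) : Prop :=
  Relation.ReflTransGen (fun x y => ∃ σ, G.trans x σ y) G.init l

/-- The MKBSC expansion `G^K` fulfills the perfect-distributed-knowledge (PDK) condition:
every reachable joint knowledge state has singleton component intersection. -/
def PDK (G : MAGIIAN Agt Loc Act) : Prop :=
  ∀ s : Agt → Set Loc, G.expand.Reachable s → ∃ l : Loc, (⋂ i, s i) = {l}

/-- A full play, given as its sequences of locations and of joint actions. -/
def IsPlay (G : MAGIIAN Agt Loc Act) (l : ℕ → Loc) (σ : ℕ → ∀ i, Act i) : Prop :=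
  l 0 = G.init ∧ ∀ k, G.trans (l k) (σ k) (l (k + 1))

/-- Observation history of agent `i` (list of observation blocks) up to time `k`. -/
def obsHist (G : MAGIIAN Agt Loc Act) (i : Agt) (l : ℕ → Loc) (k : ℕ) : List (Set Loc) :=
  (List.range (k + 1)).map fun j => G.obs i (l j)

/-- Outcomes (location sequences) of a profile of observation-based
perfect-recall strategies. -/
def PROutcome (G : MAGIIAN Agt Loc Act) (α : ∀ i, List (Set Loc) → Act i)
    (l : ℕ → Loc) : Prop :=
  ∃ σ : ℕ → ∀ i, Act i, G.IsPlay l σ ∧ ∀ k i, σ k i = α i (G.obsHist i l k)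

/-- Outcomes of a profile of observation-based memoryless strategies. -/
def MLOutcome (G : MAGIIAN Agt Loc Act) (α : ∀ i, Set Loc → Act i) (l : ℕ → Loc) : Prop :=
  ∃ σ : ℕ → ∀ i, Act i, G.IsPlay l σ ∧ ∀ k i, σ k i = α i (G.obs i (l k))

/-- A play is winning for an observable reachability objective `R` iff some
agent at some point observes an observation in `R`. -/
def WinsReach (G : MAGIIAN Agt Loc Act) (R : Set (Set Loc)) (l : ℕ → Loc) : Prop :=
  ∃ i k, G.obs i (l k) ∈ R

/-- A play is winning for an observable safety objective `F` iff at every point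
some agent observes an observation in `F`. -/
def WinsSafe (G : MAGIIAN Agt Loc Act) (F : Set (Set Loc)) (l : ℕ → Loc) : Prop :=
  ∀ k, ∃ i, G.obs i (l k) ∈ F

/-- `ob_i`: maps an observation block of `G^K` for agent `i` (all of whose members have the
same `i`-th component `A`) to the unique observation of `i` in `G` that includes `A`. -/
def obMap (G : MAGIIAN Agt Loc Act) (i : Agt) (O : Set (Agt → Set Loc)) : Set Loc :=
  ⋃ s ∈ O, ⋃ l ∈ s i, G.obs i l

/-- The translated objective `R^K = {s ∈ S : ∃ i, ∃ o ∈ R ∩ Obs_i, s i ⊆ o}`,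
as a set of joint knowledge states. -/
def transObj (G : MAGIIAN Agt Loc Act) (R : Set (Set Loc)) : Set (Agt → Set Loc) :=
  {s | ∃ i, ∃ o ∈ R, G.IsObs i o ∧ s i ⊆ o}

end MAGIIAN


namespace MAGIIAN

variable {Agt Loc : Type} {Act : Agt → Type}

/-- Strategy Preservation for safety: if `G^K` fulfills the PDK condition and there is
a winning profile of observation-based perfect-recall strategies in `G` for the
observable safety objective `F`, then there is also one in `G^K` for the translated
objective `F^K` (i.e. all of its outcomes in `G^K` stay within `F^K`). -/
theorem strategy_preservation_safe (G : MAGIIAN Agt Loc Act) (hPDK : G.PDK)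
    (F : Set (Set Loc)) (hF : ∀ o ∈ F, ∃ i, G.IsObs i o)
    (h : ∃ α : ∀ i, List (Set Loc) → Act i, ∀ l, G.PROutcome α l → G.WinsSafe F l) :
    ∃ αK : ∀ i, List (Set (Agt → Set Loc)) → Act i,
      ∀ s : ℕ → Agt → Set Loc, G.expand.PROutcome αK s →
        ∀ k, s k ∈ G.transObj F := by
  obtain ⟨α, hα⟩ := h
  refine ⟨fun i H => α i (H.map (G.obMap i)), ?_⟩
  intro s hs k
  obtain ⟨σ, ⟨hs0, hstep⟩, hσ⟩ := hs
  have hreach : ∀ k, G.expand.Reachable (s k) := by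
    intro k
    induction k with
    | zero => rw [Reachable, hs0]
    | succ n ih => exact ih.tail ⟨σ n, hstep n⟩
  choose l hl using fun k => hPDK (s k) (hreach k)
  have hmem : ∀ k i, l k ∈ s k i := by
    intro k i
    have h1 : l k ∈ ⋂ i, s k i := by rw [hl k]; exact rfl
    exact Set.mem_iInter.mp h1 i
  have hl0 : l 0 = G.init := by
    have h0 : G.init ∈ ⋂ i, s 0 i := by
      rw [hs0]; exact Set.mem_iInter.mpr fun i => rfl
    rw [hl 0] at h0
    exact h0.symm
  have htrans : ∀ k, G.trans (l k) (σ k) (l (k + 1)) := by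
    intro k
    obtain ⟨_, m, hm, m', hm', ht⟩ := hstep k
    rw [hl k] at hm
    rw [hl (k + 1)] at hm'
    rw [← hm, ← hm']
    exact ht
  have hsub : ∀ k i, s k i ⊆ G.obs i (l k) := by
    intro k i
    cases k with
    | zero =>
      have : s 0 i = {G.init} := by rw [hs0]; rfl
      rw [this, hl0]
      exact Set.singleton_subset_iff.mpr (G.obs_mem i G.init)
    | succ n =>
      obtain ⟨hk, _⟩ := hstep n
      obtain ⟨o, ⟨m, ho⟩, hEq, _⟩ := hk i
      intro x hx
      have hlk : l (n + 1) ∈ o := by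
        have h1 := hmem (n + 1) i
        rw [hEq] at h1; exact h1.1
      rw [hEq] at hx
      have hx' : x ∈ o := hx.1
      rw [ho] at hlk hx'
      rw [G.obs_eq i m (l (n + 1)) hlk]
      exact hx'
  have hob : ∀ k i, G.obMap i (G.expand.obs i (s k)) = G.obs i (l k) := by
    intro k i
    apply Set.Subset.antisymm
    · intro x hx
      simp only [obMap, Set.mem_iUnion] at hx
      obtain ⟨t, ht, m, hm, hx⟩ := hx
      have ht' : t i = s k i := ht
      rw [ht'] at hm
      have hm' : m ∈ G.obs i (l k) := hsub k i hm
      rw [G.obs_eq i (l k) m hm'] at hx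
      exact hx
    · intro x hx
      simp only [obMap, Set.mem_iUnion]
      exact ⟨s k, rfl, l k, hmem k i, hx⟩
  have hout : G.PROutcome α l := by
    refine ⟨σ, ⟨hl0, htrans⟩, ?_⟩
    intro n i
    rw [hσ n i]
    show α i ((G.expand.obsHist i s n).map (G.obMap i)) = α i (G.obsHist i l n)
    have heq : (G.expand.obsHist i s n).map (G.obMap i) = G.obsHist i l n := by
      unfold obsHist
      rw [List.map_map]
      apply List.map_congr_left
      intro j _
      exact hob j i
    rw [heq]
  obtain ⟨i, hi⟩ := hα l hout k
  exact ⟨i, G.obs i (l k), hi, ⟨l k, rfl⟩, hsub k i⟩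

end MAGIIAN
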